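/- arXiv:math/0102073 — 2 statements merged into one kernel-verified Lean document; each statement's English description precedes it below -/
import Mathlib

section
/- The polynomial sequences e_L(q) and d_L(q) defined by the recurrence c_L = c_{L-1} + q^{L-1} c_{L-2} for L ≥ 2 with initial conditions d_0 = 0, e_0 = e_1 = d_1 = 1, satisfy: sum over t ≥ 0 of q^(t^2+t) qbinom(L-t-1, t) = d_L(q), for all L ≥ 1. -/
open Finset

/-- The formal variable `q` in the field of rational functions over `ℚ`. -/
noncomputable def q : RatFunc ℚ := RatFunc.X

/-- Gaussian binomial coefficient `qbinom(N, K)` in the variable `p`;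
it is `0` when `K < 0` or `K > N`. -/
noncomputable def qbin (p : RatFunc ℚ) (N K : ℤ) : RatFunc ℚ :=
  if 0 ≤ K ∧ K ≤ N then
    (∏ j ∈ Finset.range (N - K).toNat, (1 - p ^ (K + 1 + (j : ℤ)))) /
    (∏ j ∈ Finset.range (N - K).toNat, (1 - p ^ ((j : ℤ) + 1)))
  else 0

/-- The sequence determined by `c_L = c_{L-1} + p^{L-1} c_{L-2}` for `L ≥ 2`,
with initial values `c_0 = c0`, `c_1 = c1`. -/
noncomputable def rr (p c0 c1 : RatFunc ℚ) : ℕ → RatFunc ℚ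
  | 0 => c0
  | 1 => c1
  | n + 2 => rr p c0 c1 (n + 1) + p ^ (n + 1) * rr p c0 c1 n

lemma q_ne_zero : q ≠ 0 := RatFunc.X_ne_zero

lemma one_sub_q_pow_ne {n : ℕ} (hn : 1 ≤ n) : (1 : RatFunc ℚ) - q ^ n ≠ 0 := by
  have : (1 : RatFunc ℚ) - q ^ n = algebraMap (Polynomial ℚ) _ (1 - Polynomial.X ^ n) := by
    simp [q, ← RatFunc.algebraMap_X, map_sub, map_pow]
  rw [this]
  apply RatFunc.algebraMap_ne_zero
  intro h
  have hd := Polynomial.natDegree_X_pow (R := ℚ) n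
  have h2 : Polynomial.X ^ n = (1 : Polynomial ℚ) := by linear_combination -h
  rw [h2] at hd
  simp at hd
  omega

noncomputable def P (a m : ℕ) : RatFunc ℚ := ∏ j ∈ Finset.range m, (1 - q ^ (a + j))

lemma P_ne {a : ℕ} (m : ℕ) (ha : 1 ≤ a) : P a m ≠ 0 := by
  rw [P]
  apply Finset.prod_ne_zero_iff.mpr
  intro j _
  exact one_sub_q_pow_ne (by omega)

lemma P_succ (a m : ℕ) : P a (m+1) = P a m * (1 - q ^ (a+m)) := Finset.prod_range_succ _ _

lemma P_succ' (a m : ℕ) : P a (m+1) = P (a+1) m * (1 - q ^ a) := by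
  rw [P, Finset.prod_range_succ' (fun j => 1 - q ^ (a + j)) m]
  simp only [add_zero]
  congr 1
  apply Finset.prod_congr rfl
  intro j _
  congr 2
  omega

lemma qbin_of_not (N K : ℤ) (h : ¬(0 ≤ K ∧ K ≤ N)) : qbin q N K = 0 := by
  rw [qbin, if_neg h]

lemma qbin_nat (n t : ℕ) (h : t ≤ n) :
    qbin q n t = P (t+1) (n-t) / P 1 (n-t) := by
  rw [qbin, if_pos ⟨Int.ofNat_nonneg t, by exact_mod_cast h⟩]
  have hnt : ((n:ℤ) - t).toNat = n - t := by omega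
  rw [hnt, P, P]
  have e1 : ∀ j ∈ Finset.range (n-t), (1:RatFunc ℚ) - q ^ ((t:ℤ) + 1 + (j:ℤ)) = 1 - q ^ (t+1+j) := by
    intro j _
    rw [show (t:ℤ)+1+(j:ℤ) = ((t+1+j:ℕ):ℤ) by push_cast; ring, zpow_natCast]
  have e2 : ∀ j ∈ Finset.range (n-t), (1:RatFunc ℚ) - q ^ ((j:ℤ) + 1) = 1 - q ^ (1+j) := by
    intro j _
    rw [show ((j:ℤ))+1 = ((1+j:ℕ):ℤ) by push_cast; ring, zpow_natCast]
  rw [Finset.prod_congr rfl e1, Finset.prod_congr rfl e2]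

lemma qbin_self (N : ℤ) (h : 0 ≤ N) : qbin q N N = 1 := by
  rw [qbin, if_pos ⟨h, le_refl N⟩]
  simp

lemma pascal (N K : ℤ) (h : 1 ≤ N ∨ 1 ≤ K) :
    qbin q N K = qbin q (N-1) K + q ^ (N-K) * qbin q (N-1) (K-1) := by
  rcases lt_or_ge K 0 with hK | hK
  · rw [qbin_of_not _ _ (by omega), qbin_of_not _ _ (by omega), qbin_of_not _ _ (by omega)]; ring
  rcases lt_or_ge N K with hNK | hNK
  · rw [qbin_of_not _ _ (by omega), qbin_of_not _ _ (by omega), qbin_of_not _ _ (by omega)]; ring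
  rcases eq_or_lt_of_le hNK with heq | hlt
  · subst heq
    rw [qbin_self _ (by omega), qbin_of_not _ _ (by omega), qbin_self _ (by omega),
      sub_self, zpow_zero]
    ring
  · lift K to ℕ using hK with t
    lift N to ℕ using (by omega : (0:ℤ) ≤ N) with n
    have htn : t + 1 ≤ n := by exact_mod_cast hlt
    obtain ⟨u, hu⟩ : ∃ u, n - t = u + 1 := ⟨n - t - 1, by omega⟩
    rw [show (n:ℤ) - 1 = ((n-1:ℕ):ℤ) by omega]
    rw [qbin_nat n t (by omega), qbin_nat (n-1) t (by omega)]
    rw [hu, show n - 1 - t = u by omega]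
    rw [show (n:ℤ) - (t:ℤ) = ((u+1:ℕ):ℤ) by omega, zpow_natCast]
    cases t with
    | zero =>
      rw [qbin_of_not _ _ (by omega)]
      rw [div_self (P_ne _ le_rfl), div_self (P_ne _ le_rfl), mul_zero, add_zero]
    | succ s =>
      rw [show ((s+1:ℕ):ℤ) - 1 = ((s:ℕ):ℤ) by push_cast; ring]
      rw [qbin_nat (n-1) s (by omega), show n - 1 - s = u + 1 by omega]
      rw [P_succ (s+1+1) u, P_succ 1 u, P_succ' (s+1) u]
      have h1 : P 1 u ≠ 0 := P_ne u le_rfl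
      have h2 : P (s+1+1) u ≠ 0 := P_ne u (by omega)
      have h3 : (1:RatFunc ℚ) - q ^ (1+u) ≠ 0 := one_sub_q_pow_ne (by omega)
      field_simp
      ring

noncomputable def S (L : ℕ) : RatFunc ℚ :=
  ∑ t ∈ Finset.range (L + 1), q ^ (t ^ 2 + t) * qbin q ((L : ℤ) - t - 1) t

lemma key (M : ℕ) : S (M+3) = S (M+2) + q ^ (M+2) * S (M+1) := by
  have hsplit : ∀ t ∈ Finset.range (M+3+1),
      q ^ (t ^ 2 + t) * qbin q ((↑(M+3):ℤ) - ↑t - 1) ↑t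
        = q ^ (t ^ 2 + t) * qbin q ((↑(M+2):ℤ) - ↑t - 1) ↑t
          + q ^ (M+2) * (q ^ (t ^ 2 - t) * qbin q ((↑(M+2):ℤ) - ↑t - 1) ((↑t:ℤ) - 1)) := by
    intro t _
    have hp := pascal ((↑(M+3):ℤ) - ↑t - 1) ↑t (by omega)
    rw [show ((↑(M+3):ℤ) - ↑t - 1) - 1 = (↑(M+2):ℤ) - ↑t - 1 by push_cast; ring] at hp
    rw [hp, mul_add, ← mul_assoc, ← mul_assoc]
    congr 1
    congr 1
    rw [← zpow_natCast q (t^2+t), ← zpow_natCast q (M+2), ← zpow_natCast q (t^2-t),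
      ← zpow_add₀ q_ne_zero, ← zpow_add₀ q_ne_zero]
    congr 1
    have ht : t ≤ t^2 := Nat.le_self_pow two_ne_zero t
    push_cast [Nat.cast_sub ht]
    ring
  rw [S, S, S, Finset.sum_congr rfl hsplit, Finset.sum_add_distrib]
  congr 1
  · rw [Finset.sum_range_succ,
      qbin_of_not ((↑(M+2):ℤ) - ↑(M+3) - 1) (↑(M+3)) (by omega),
      mul_zero, add_zero, show M+2+1 = M+3 by omega]
  · rw [← Finset.mul_sum]
    congr 1
    rw [Finset.sum_range_succ',
      qbin_of_not ((↑(M+2):ℤ) - ↑(0:ℕ) - 1) ((↑(0:ℕ):ℤ) - 1) (by omega),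
      mul_zero, add_zero,
      show M+3 = M+2+1 by omega, Finset.sum_range_succ,
      qbin_of_not ((↑(M+2):ℤ) - ↑(M+2+1) - 1) ((↑(M+2+1):ℤ) - 1) (by omega),
      mul_zero, add_zero, show M+1+1 = M+2 by omega]
    refine Finset.sum_congr rfl fun s _ => ?_
    have hsq : (s+1)^2 - (s+1) = s^2+s := by
      have h : (s+1)^2 = s^2+2*s+1 := by ring
      omega
    rw [show ((↑(M+2):ℤ)) - ↑(s+1) - 1 = ↑(M+1) - ↑s - 1 by push_cast; ring,
      show ((↑(s+1):ℤ)) - 1 = (↑s:ℤ) by push_cast; ring, hsq]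

lemma S1 : S 1 = 1 := by
  rw [S, Finset.sum_range_succ, Finset.sum_range_succ, Finset.sum_range_zero,
    qbin_of_not (((1:ℕ):ℤ) - ((1:ℕ):ℤ) - 1) ((1:ℕ):ℤ) (by omega),
    show ((1:ℕ):ℤ) - ((0:ℕ):ℤ) - 1 = ((0:ℕ):ℤ) by omega,
    qbin_self ((0:ℕ):ℤ) (by omega)]
  norm_num

lemma S2 : S 2 = 1 := by
  rw [S, Finset.sum_range_succ, Finset.sum_range_succ, Finset.sum_range_succ,
    Finset.sum_range_zero,
    qbin_of_not (((2:ℕ):ℤ) - ((2:ℕ):ℤ) - 1) ((2:ℕ):ℤ) (by omega),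
    qbin_of_not (((2:ℕ):ℤ) - ((1:ℕ):ℤ) - 1) ((1:ℕ):ℤ) (by omega),
    show ((2:ℕ):ℤ) - ((0:ℕ):ℤ) - 1 = ((1:ℕ):ℤ) by omega,
    qbin_nat 1 0 (by omega)]
  rw [div_self (P_ne _ le_rfl)]
  norm_num

lemma main : ∀ n : ℕ, S (n+1) = rr q 0 1 (n+1) ∧ S (n+2) = rr q 0 1 (n+2) := by
  intro n
  induction n with
  | zero =>
    constructor
    · rw [S1]; rfl
    · rw [S2]; show (1:RatFunc ℚ) = rr q 0 1 1 + q ^ 1 * rr q 0 1 0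
      show (1:RatFunc ℚ) = 1 + q ^ 1 * 0
      ring
  | succ m ih =>
    refine ⟨ih.2, ?_⟩
    have h3 : S (m+1+2) = S (m+2) + q ^ (m+2) * S (m+1) := key m
    rw [h3, ih.1, ih.2]
    show _ = rr q 0 1 (m+1+1) + q ^ (m+1+1) * rr q 0 1 (m+1)
    rfl

/-- `d_L(q) := rr q 0 1 L` satisfies `Σ_{t≥0} q^{t²+t} qbinom(L-t-1, t) = d_L(q)` for `L ≥ 1`. -/
theorem stmt2 (L : ℕ) (hL : 1 ≤ L) :
    ∑ t ∈ Finset.range (L + 1), q ^ (t ^ 2 + t) * qbin q ((L : ℤ) - t - 1) t = rr q 0 1 L := by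
  obtain ⟨n, rfl⟩ : ∃ n, L = n + 1 := ⟨L - 1, by omega⟩
  exact (main n).1
end

section
/- For L ≥ 0, the polynomial d_L(q) equals the alternating sum over all integers j of q^{j(10j+3)} qbinom(L, ⌊(L-1)/2⌋ - 5j) - q^{(2j+1)(5j+1)} qbinom(L, ⌊(L-3)/2⌋ - 5j). -/
open Finset

lemma one_sub_q_pow_ne_zero {n : ℤ} (hn : 0 < n) : (1 : RatFunc ℚ) - q ^ n ≠ 0 := by
  have h1 : q ^ n = q ^ (n.toNat : ℕ) := by
    rw [← zpow_natCast, Int.toNat_of_nonneg hn.le]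
  rw [h1, sub_ne_zero]
  intro h
  have h0 : (algebraMap (Polynomial ℚ) (RatFunc ℚ)) 1 =
      (algebraMap (Polynomial ℚ) (RatFunc ℚ)) (Polynomial.X ^ n.toNat) := by
    simpa [q, RatFunc.algebraMap_X] using h
  have h2 := RatFunc.algebraMap_injective ℚ h0
  have h3 := congrArg Polynomial.natDegree h2
  simp [Polynomial.natDegree_X_pow] at h3
  omega

noncomputable def W (M : ℤ) : RatFunc ℚ := ∏ j ∈ Finset.range M.toNat, (1 - q ^ ((j : ℤ) + 1))

lemma W_ne_zero (M : ℤ) : W M ≠ 0 := by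
  refine Finset.prod_ne_zero_iff.2 fun j _ => one_sub_q_pow_ne_zero (by positivity)

lemma W_nonpos {M : ℤ} (h : M ≤ 0) : W M = 1 := by
  unfold W; rw [Int.toNat_of_nonpos h]; simp

lemma W_succ {M : ℤ} (h : 0 < M) : W M = W (M - 1) * (1 - q ^ M) := by
  unfold W
  have h1 : M.toNat = (M-1).toNat + 1 := by omega
  rw [h1, Finset.prod_range_succ]
  congr 2
  push_cast [Int.toNat_of_nonneg (by omega : (0:ℤ) ≤ M - 1)]
  ring

lemma qbin_formula {N K : ℤ} (h0 : 0 ≤ K) (h1 : K ≤ N) :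
    qbin q N K = W N / (W K * W (N - K)) := by
  unfold qbin
  rw [if_pos ⟨h0, h1⟩]
  have key : W K * (∏ j ∈ Finset.range (N - K).toNat, (1 - q ^ (K + 1 + (j : ℤ)))) = W N := by
    unfold W
    have h2 : N.toNat = K.toNat + (N - K).toNat := by omega
    rw [h2, Finset.prod_range_add]
    congr 1
    apply Finset.prod_congr rfl
    intro j _
    congr 1
    push_cast [Int.toNat_of_nonneg h0]
    ring
  have hS : (∏ j ∈ Finset.range (N - K).toNat, (1 - q ^ (K + 1 + (j : ℤ)))) = W N / W K := by
    rw [eq_div_iff (W_ne_zero K)]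
    linear_combination key
  rw [hS, div_div]; rfl

lemma qbin_zero {N K : ℤ} (h : ¬(0 ≤ K ∧ K ≤ N)) : qbin q N K = 0 := if_neg h

lemma qbin_zero_right {N : ℤ} (h : 0 ≤ N) : qbin q N 0 = 1 := by
  rw [qbin_formula le_rfl h, W_nonpos le_rfl, sub_zero, one_mul, div_self (W_ne_zero N)]

lemma qbin_diag {N : ℤ} (h : 0 ≤ N) : qbin q N N = 1 := by
  rw [qbin_formula h le_rfl, sub_self, W_nonpos le_rfl, mul_one, div_self (W_ne_zero N)]

lemma pascalA {N K : ℤ} (hN : 1 ≤ N) :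
    qbin q N K = qbin q (N-1) K + q ^ (N - K) * qbin q (N-1) (K-1) := by
  rcases lt_trichotomy K 0 with hK | hK | hK
  · rw [qbin_zero (by omega), qbin_zero (by omega), qbin_zero (K := K - 1) (by omega)]
    ring
  · subst hK
    rw [qbin_zero_right (by omega), qbin_zero_right (by omega), qbin_zero (by omega)]
    ring
  rcases lt_trichotomy N K with hNK | hNK | hNK
  · rw [qbin_zero (by omega), qbin_zero (by omega), qbin_zero (by omega)]
    ring
  · subst hNK
    rw [qbin_diag (by omega), qbin_zero (by omega), qbin_diag (by omega), sub_self]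
    simp
  · rw [qbin_formula (by omega) (by omega), qbin_formula (by omega) (by omega),
        qbin_formula (by omega) (by omega)]
    rw [show N - 1 - K = N - K - 1 by ring, show N - 1 - (K - 1) = N - K by ring]
    rw [W_succ (show (0:ℤ) < N by omega), W_succ (show (0:ℤ) < K by omega),
        W_succ (show (0:ℤ) < N - K by omega)]
    rw [show q ^ N = q ^ (N - K) * q ^ K by rw [← zpow_add₀ q_ne_zero]; ring_nf]
    have h1 := W_ne_zero (N-1)
    have h2 := W_ne_zero (K-1)
    have h3 := W_ne_zero (N-K-1)
    have h4 := one_sub_q_pow_ne_zero (show (0:ℤ) < K by omega)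
    have h5 := one_sub_q_pow_ne_zero (show (0:ℤ) < N - K by omega)
    field_simp
    ring

lemma pascalB {N K : ℤ} (hN : 1 ≤ N) :
    qbin q N K = qbin q (N-1) (K-1) + q ^ K * qbin q (N-1) K := by
  rcases lt_trichotomy K 0 with hK | hK | hK
  · rw [qbin_zero (show ¬((0:ℤ) ≤ K ∧ K ≤ N) by omega),
        qbin_zero (show ¬((0:ℤ) ≤ K - 1 ∧ K - 1 ≤ N - 1) by omega),
        qbin_zero (show ¬((0:ℤ) ≤ K ∧ K ≤ N - 1) by omega)]
    ring
  · subst hK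
    rw [qbin_zero_right (by omega), qbin_zero_right (by omega),
        qbin_zero (show ¬((0:ℤ) ≤ 0 - 1 ∧ 0 - 1 ≤ N - 1) by omega)]
    simp
  rcases lt_trichotomy N K with hNK | hNK | hNK
  · rw [qbin_zero (show ¬((0:ℤ) ≤ K ∧ K ≤ N) by omega),
        qbin_zero (show ¬((0:ℤ) ≤ K - 1 ∧ K - 1 ≤ N - 1) by omega),
        qbin_zero (show ¬((0:ℤ) ≤ K ∧ K ≤ N - 1) by omega)]
    ring
  · subst hNK
    rw [qbin_diag (show (0:ℤ) ≤ N by omega),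
        qbin_zero (show ¬((0:ℤ) ≤ N ∧ N ≤ N - 1) by omega),
        show qbin q (N-1) (N-1) = 1 from qbin_diag (by omega)]
    ring
  · rw [qbin_formula (by omega) (by omega), qbin_formula (by omega) (by omega),
        qbin_formula (by omega) (by omega)]
    rw [show N - 1 - K = N - K - 1 by ring, show N - 1 - (K - 1) = N - K by ring]
    rw [W_succ (show (0:ℤ) < N by omega), W_succ (show (0:ℤ) < K by omega),
        W_succ (show (0:ℤ) < N - K by omega)]
    rw [show q ^ N = q ^ (N - K) * q ^ K by rw [← zpow_add₀ q_ne_zero]; ring_nf]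
    have h1 := W_ne_zero (N-1)
    have h2 := W_ne_zero (K-1)
    have h3 := W_ne_zero (N-K-1)
    have h4 := one_sub_q_pow_ne_zero (show (0:ℤ) < K by omega)
    have h5 := one_sub_q_pow_ne_zero (show (0:ℤ) < N - K by omega)
    field_simp
    ring

lemma qbin_symm {N K : ℤ} (h : 0 ≤ N) : qbin q N K = qbin q N (N - K) := by
  by_cases hK : 0 ≤ K ∧ K ≤ N
  · rw [qbin_formula hK.1 hK.2, qbin_formula (by omega) (by omega),
        show N - (N - K) = K by ring, mul_comm]
  · rw [qbin_zero hK, qbin_zero (by omega)]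

lemma qmul (a b c : ℤ) (h : a + b = c) : q ^ a * q ^ b = q ^ c := by
  rw [← zpow_add₀ q_ne_zero, h]

/-- the LHS polynomial -/
noncomputable def Dl (L : ℕ) : RatFunc ℚ :=
  ∑ t ∈ Finset.range (L + 1), q ^ (t ^ 2 + t) * qbin q ((L : ℤ) - t - 1) t

lemma Dl_rec (L : ℕ) : Dl (L + 2) = Dl (L + 1) + q ^ (L + 1) * Dl L := by
  have trim : Dl (L + 2) = ∑ t ∈ Finset.range (L + 1),
      q ^ (t ^ 2 + t) * qbin q ((L : ℤ) + 1 - t) t := by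
    unfold Dl
    rw [← Finset.sum_subset (Finset.range_subset_range.2 (by omega : L + 1 ≤ L + 2 + 1))]
    · apply Finset.sum_congr rfl
      intro t ht
      congr 2
      push_cast; ring
    · intro t ht ht'
      simp only [Finset.mem_range] at ht ht'
      rw [qbin_zero (by omega), mul_zero]
  rw [trim]
  have step : ∀ t ∈ Finset.range (L + 1),
      q ^ (t ^ 2 + t) * qbin q ((L : ℤ) + 1 - t) t =
      q ^ (t ^ 2 + t) * qbin q ((L : ℤ) - t) t
        + q ^ (t ^ 2 + t) * q ^ ((L : ℤ) + 1 - 2 * t) * qbin q ((L : ℤ) - t) ((t : ℤ) - 1) := by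
    intro t ht
    simp only [Finset.mem_range] at ht
    rw [pascalA (by omega : (1:ℤ) ≤ (L : ℤ) + 1 - t)]
    rw [show (L : ℤ) + 1 - t - 1 = (L : ℤ) - t by ring,
        show (L : ℤ) + 1 - t - t = (L : ℤ) + 1 - 2 * t by ring]
    ring
  rw [Finset.sum_congr rfl step, Finset.sum_add_distrib]
  congr 1
  · unfold Dl
    rw [← Finset.sum_subset (Finset.range_subset_range.2 (by omega : L + 1 ≤ L + 1 + 1))]
    · apply Finset.sum_congr rfl
      intro t ht
      congr 2
      push_cast; ring
    · intro t ht ht'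
      simp only [Finset.mem_range] at ht ht'
      rw [qbin_zero (by omega), mul_zero]
  · rw [Finset.sum_range_succ']
    push_cast
    rw [qbin_zero (show ¬((0:ℤ) ≤ -1 ∧ -1 ≤ (L:ℤ) - 0) by omega), mul_zero, add_zero]
    unfold Dl
    rw [Finset.mul_sum]
    rw [← Finset.sum_subset (Finset.range_subset_range.2 (by omega : L ≤ L + 1))]
    swap
    · intro t ht ht'
      simp only [Finset.mem_range] at ht ht'
      rw [qbin_zero (show ¬((0:ℤ) ≤ (t:ℤ) ∧ (t:ℤ) ≤ (L:ℤ) - t - 1) by omega), mul_zero, mul_zero]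
    apply Finset.sum_congr rfl
    intro s hs
    simp only [Finset.mem_range] at hs
    have harg : (L : ℤ) - (s + 1) = (L : ℤ) - s - 1 := by ring
    have harg2 : ((s : ℤ) + 1) - 1 = (s : ℤ) := by ring
    rw [harg, harg2]
    have hepow : q ^ ((s+1) ^ 2 + (s+1)) * q ^ ((L : ℤ) + 1 - 2 * ((s:ℤ) + 1)) =
        q ^ (L + 1) * q ^ (s ^ 2 + s) := by
      rw [← zpow_natCast q ((s+1) ^ 2 + (s+1)), ← zpow_natCast q (L + 1),
          ← zpow_natCast q (s ^ 2 + s), ← zpow_add₀ q_ne_zero, ← zpow_add₀ q_ne_zero]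
      congr 1
      push_cast; ring
    calc q ^ ((s+1) ^ 2 + (s+1)) * q ^ ((L : ℤ) + 1 - 2 * ((s:ℤ) + 1)) * qbin q ((L:ℤ) - s - 1) s
        = (q ^ ((s+1) ^ 2 + (s+1)) * q ^ ((L : ℤ) + 1 - 2 * ((s:ℤ) + 1))) * qbin q ((L:ℤ) - s - 1) s := by
          ring
      _ = (q ^ (L + 1) * q ^ (s ^ 2 + s)) * qbin q ((L:ℤ) - s - 1) s := by rw [hepow]
      _ = q ^ (L + 1) * (q ^ (s ^ 2 + s) * qbin q ((L:ℤ) - s - 1) s) := by ring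

lemma keyEven (m j : ℤ) (hm : 0 ≤ m) :
    q^(j*(10*j+3)) * qbin q (2*m+2) (m-5*j) - q^((2*j+1)*(5*j+1)) * qbin q (2*m+2) (m-1-5*j)
    = (q^(j*(10*j+3)) * qbin q (2*m+1) (m-5*j) - q^((2*j+1)*(5*j+1)) * qbin q (2*m+1) (m-1-5*j))
      + q^(2*m+1) * (q^(j*(10*j+3)) * qbin q (2*m) (m-1-5*j) - q^((2*j+1)*(5*j+1)) * qbin q (2*m) (m-2-5*j))
      + (q^(10*j^2+8*j+m+2) * qbin q (2*m) (m-2-5*j) - q^(10*j^2+12*j+m+4) * qbin q (2*m) (m+3+5*j)) := by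
  have hA1 : qbin q (2*m+2) (m-5*j) = qbin q (2*m+1) (m-5*j) + q^(m+2+5*j) * qbin q (2*m+1) (m-1-5*j) := by
    have h := pascalA (N := 2*m+2) (K := m-5*j) (by omega)
    rw [show 2*m+2-1 = 2*m+1 by ring, show 2*m+2-(m-5*j) = m+2+5*j by ring,
        show m-5*j-1 = m-1-5*j by ring] at h
    exact h
  have hA2 : qbin q (2*m+2) (m-1-5*j) = qbin q (2*m+1) (m-1-5*j) + q^(m+3+5*j) * qbin q (2*m+1) (m-2-5*j) := by
    have h := pascalA (N := 2*m+2) (K := m-1-5*j) (by omega)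
    rw [show 2*m+2-1 = 2*m+1 by ring, show 2*m+2-(m-1-5*j) = m+3+5*j by ring,
        show m-1-5*j-1 = m-2-5*j by ring] at h
    exact h
  have hB1 : qbin q (2*m+1) (m-1-5*j) = qbin q (2*m) (m-2-5*j) + q^(m-1-5*j) * qbin q (2*m) (m-1-5*j) := by
    have h := pascalB (N := 2*m+1) (K := m-1-5*j) (by omega)
    rw [show 2*m+1-1 = 2*m by ring, show m-1-5*j-1 = m-2-5*j by ring] at h
    exact h
  have hB2 : qbin q (2*m+1) (m-2-5*j) = qbin q (2*m) (m-3-5*j) + q^(m-2-5*j) * qbin q (2*m) (m-2-5*j) := by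
    have h := pascalB (N := 2*m+1) (K := m-2-5*j) (by omega)
    rw [show 2*m+1-1 = 2*m by ring, show m-2-5*j-1 = m-3-5*j by ring] at h
    exact h
  have hsym : qbin q (2*m) (m-3-5*j) = qbin q (2*m) (m+3+5*j) := by
    have h := qbin_symm (N := 2*m) (K := m-3-5*j) (by omega)
    rw [show 2*m-(m-3-5*j) = m+3+5*j by ring] at h
    exact h
  rw [hA1, hA2, hB1, hB2, hsym]
  linear_combination
    (q^(j*(10*j+3)) * qbin q (2*m) (m-1-5*j)) * qmul (m+2+5*j) (m-1-5*j) (2*m+1) (by ring)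
    + qbin q (2*m) (m-2-5*j) * qmul (j*(10*j+3)) (m+2+5*j) (10*j^2+8*j+m+2) (by ring)
    - (q^((2*j+1)*(5*j+1)) * qbin q (2*m) (m-2-5*j)) * qmul (m+3+5*j) (m-2-5*j) (2*m+1) (by ring)
    - qbin q (2*m) (m+3+5*j) * qmul ((2*j+1)*(5*j+1)) (m+3+5*j) (10*j^2+12*j+m+4) (by ring)

lemma keyOdd (m j : ℤ) (hm : 0 ≤ m) :
    q^(j*(10*j+3)) * qbin q (2*m+3) (m+1-5*j) - q^((2*j+1)*(5*j+1)) * qbin q (2*m+3) (m-5*j)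
    = (q^(j*(10*j+3)) * qbin q (2*m+2) (m-5*j) - q^((2*j+1)*(5*j+1)) * qbin q (2*m+2) (m-1-5*j))
      + q^(2*m+2) * (q^(j*(10*j+3)) * qbin q (2*m+1) (m-5*j) - q^((2*j+1)*(5*j+1)) * qbin q (2*m+1) (m-1-5*j))
      + (q^(10*j^2-2*j+m+1) * qbin q (2*m+1) (m+1-5*j) - q^(10*j^2+2*j+m+1) * qbin q (2*m+1) (m+1+5*j)) := by
  have hB1 : qbin q (2*m+3) (m+1-5*j) = qbin q (2*m+2) (m-5*j) + q^(m+1-5*j) * qbin q (2*m+2) (m+1-5*j) := by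
    have h := pascalB (N := 2*m+3) (K := m+1-5*j) (by omega)
    rw [show 2*m+3-1 = 2*m+2 by ring, show m+1-5*j-1 = m-5*j by ring] at h
    exact h
  have hB2 : qbin q (2*m+3) (m-5*j) = qbin q (2*m+2) (m-1-5*j) + q^(m-5*j) * qbin q (2*m+2) (m-5*j) := by
    have h := pascalB (N := 2*m+3) (K := m-5*j) (by omega)
    rw [show 2*m+3-1 = 2*m+2 by ring, show m-5*j-1 = m-1-5*j by ring] at h
    exact h
  have hA1 : qbin q (2*m+2) (m+1-5*j) = qbin q (2*m+1) (m+1-5*j) + q^(m+1+5*j) * qbin q (2*m+1) (m-5*j) := by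
    have h := pascalA (N := 2*m+2) (K := m+1-5*j) (by omega)
    rw [show 2*m+2-1 = 2*m+1 by ring, show 2*m+2-(m+1-5*j) = m+1+5*j by ring,
        show m+1-5*j-1 = m-5*j by ring] at h
    exact h
  have hA2 : qbin q (2*m+2) (m-5*j) = qbin q (2*m+1) (m-5*j) + q^(m+2+5*j) * qbin q (2*m+1) (m-1-5*j) := by
    have h := pascalA (N := 2*m+2) (K := m-5*j) (by omega)
    rw [show 2*m+2-1 = 2*m+1 by ring, show 2*m+2-(m-5*j) = m+2+5*j by ring,
        show m-5*j-1 = m-1-5*j by ring] at h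
    exact h
  have hsym : qbin q (2*m+1) (m+1+5*j) = qbin q (2*m+1) (m-5*j) := by
    have h := qbin_symm (N := 2*m+1) (K := m+1+5*j) (by omega)
    rw [show 2*m+1-(m+1+5*j) = m-5*j by ring] at h
    exact h
  rw [hB1, hB2, hA1, hA2, hsym]
  linear_combination
    (q^(j*(10*j+3)) * qbin q (2*m+1) (m-5*j)) * qmul (m+1-5*j) (m+1+5*j) (2*m+2) (by ring)
    - qbin q (2*m+1) (m-5*j) * qmul ((2*j+1)*(5*j+1)) (m-5*j) (10*j^2+2*j+m+1) (by ring)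
    + qbin q (2*m+1) (m+1-5*j) * qmul (j*(10*j+3)) (m+1-5*j) (10*j^2-2*j+m+1) (by ring)
    - (q^((2*j+1)*(5*j+1)) * qbin q (2*m+1) (m-1-5*j)) * qmul (m-5*j) (m+2+5*j) (2*m+2) (by ring)

/-- summand of the RHS -/
noncomputable def T (L : ℕ) (j : ℤ) : RatFunc ℚ :=
  q ^ (j * (10 * j + 3)) * qbin q L (((L : ℤ) - 1).fdiv 2 - 5 * j)
    - q ^ ((2 * j + 1) * (5 * j + 1)) * qbin q L (((L : ℤ) - 3).fdiv 2 - 5 * j)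

lemma fd (a : ℤ) : a.fdiv 2 = a / 2 := Int.fdiv_eq_ediv_of_nonneg a (by norm_num)

lemma qbin_ne {N K : ℤ} (h : qbin q N K ≠ 0) : 0 ≤ K ∧ K ≤ N := by
  by_contra hc; exact h (qbin_zero hc)

lemma T_supp (L : ℕ) {j : ℤ} (h : T L j ≠ 0) : -(L:ℤ)-1 ≤ j ∧ j ≤ (L:ℤ)+1 := by
  unfold T at h
  rw [fd, fd] at h
  by_contra hc
  apply h
  rw [qbin_zero (by omega), qbin_zero (by omega), mul_zero, mul_zero, sub_zero]

lemma S_eq (L : ℕ) (M : ℤ) (hM : (L:ℤ)+1 ≤ M) :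
    ∑ᶠ j : ℤ, T L j = ∑ j ∈ Finset.Icc (-M) M, T L j := by
  apply finsum_eq_sum_of_support_subset
  intro j hj
  simp only [Finset.coe_Icc, Set.mem_Icc]
  have := T_supp L hj
  omega

noncomputable def Phe (m t : ℤ) : RatFunc ℚ := q^(10*t^2+8*t+m+2) * qbin q (2*m) (m-2-5*t)
noncomputable def Pho (m t : ℤ) : RatFunc ℚ := q^(10*t^2-2*t+m+1) * qbin q (2*m+1) (m+1-5*t)

lemma Phe_supp {m t : ℤ} (h : Phe m t ≠ 0) : -m-2 ≤ t ∧ t ≤ m+2 := by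
  unfold Phe at h
  by_contra hc
  apply h
  rw [qbin_zero (by omega), mul_zero]

lemma Pho_supp {m t : ℤ} (h : Pho m t ≠ 0) : -m-2 ≤ t ∧ t ≤ m+2 := by
  unfold Pho at h
  by_contra hc
  apply h
  rw [qbin_zero (by omega), mul_zero]

lemma sum_Phe (m M : ℤ) (hM : m + 3 ≤ M) :
    ∑ j ∈ Finset.Icc (-M) M, Phe m (-1-j) = ∑ j ∈ Finset.Icc (-M) M, Phe m j := by
  have h1 : ∑ᶠ j : ℤ, Phe m (-1-j) = ∑ j ∈ Finset.Icc (-M) M, Phe m (-1-j) := by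
    apply finsum_eq_sum_of_support_subset
    intro j hj
    simp only [Finset.coe_Icc, Set.mem_Icc]
    have := Phe_supp hj
    omega
  have h3 : ∑ᶠ j : ℤ, Phe m j = ∑ j ∈ Finset.Icc (-M) M, Phe m j := by
    apply finsum_eq_sum_of_support_subset
    intro j hj
    simp only [Finset.coe_Icc, Set.mem_Icc]
    have := Phe_supp hj
    omega
  have h2 : ∑ᶠ j : ℤ, Phe m (-1-j) = ∑ᶠ j : ℤ, Phe m j := by
    have := finsum_comp_equiv (Equiv.subLeft (-1 : ℤ)) (f := Phe m)
    simpa [Equiv.subLeft, sub_eq_add_neg] using this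
  rw [← h1, h2, h3]

lemma sum_Pho (m M : ℤ) (hM : m + 3 ≤ M) :
    ∑ j ∈ Finset.Icc (-M) M, Pho m (-j) = ∑ j ∈ Finset.Icc (-M) M, Pho m j := by
  have h1 : ∑ᶠ j : ℤ, Pho m (-j) = ∑ j ∈ Finset.Icc (-M) M, Pho m (-j) := by
    apply finsum_eq_sum_of_support_subset
    intro j hj
    simp only [Finset.coe_Icc, Set.mem_Icc]
    have := Pho_supp hj
    omega
  have h3 : ∑ᶠ j : ℤ, Pho m j = ∑ j ∈ Finset.Icc (-M) M, Pho m j := by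
    apply finsum_eq_sum_of_support_subset
    intro j hj
    simp only [Finset.coe_Icc, Set.mem_Icc]
    have := Pho_supp hj
    omega
  have h2 : ∑ᶠ j : ℤ, Pho m (-j) = ∑ᶠ j : ℤ, Pho m j := by
    have := finsum_comp_equiv (Equiv.neg ℤ) (f := Pho m)
    simpa using this
  rw [← h1, h2, h3]

lemma S_rec (L : ℕ) :
    ∑ᶠ j : ℤ, T (L + 2) j = (∑ᶠ j : ℤ, T (L + 1) j) + q ^ (L + 1) * ∑ᶠ j : ℤ, T L j := by
  set M : ℤ := (L : ℤ) + 9 with hMdef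
  rw [S_eq (L+2) M (by push_cast; omega), S_eq (L+1) M (by push_cast; omega),
      S_eq L M (by push_cast; omega)]
  rcases Nat.even_or_odd L with ⟨n, hn⟩ | ⟨n, hn⟩
  · -- even, L = n + n
    subst hn
    have key : ∀ j : ℤ, T (n + n + 2) j =
        T (n + n + 1) j + q ^ (n + n + 1) * T (n + n) j + (Phe n j - Phe n (-1-j)) := by
      intro j
      unfold T Phe
      rw [fd, fd, fd, fd, fd, fd]
      push_cast
      rw [show ((n:ℤ) + n + 2 - 1)/2 = n by omega,
          show ((n:ℤ) + n + 2 - 3)/2 = n - 1 by omega,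
          show ((n:ℤ) + n + 1 - 1)/2 = n by omega,
          show ((n:ℤ) + n + 1 - 3)/2 = n - 1 by omega,
          show ((n:ℤ) + n - 1)/2 = n - 1 by omega,
          show ((n:ℤ) + n - 3)/2 = n - 2 by omega]
      rw [show (n:ℤ) + n + 2 = 2*n+2 by ring, show (n:ℤ) + n + 1 = 2*n+1 by ring,
          show (n:ℤ) + n = 2*n by ring]
      rw [show ((n:ℤ)) - 5*j = (n:ℤ)-5*j from rfl]
      rw [show ((n:ℤ)) - 1 - 5*j = (n:ℤ)-1-5*j from rfl]
      rw [show ((n:ℤ)) - 2 - 5*j = (n:ℤ)-2-5*j from rfl]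
      rw [show q ^ (n + n + 1) = q ^ (2*(n:ℤ)+1) by
        rw [← zpow_natCast]; congr 1 <;> omega]
      have hk := keyEven (n:ℤ) j (by positivity)
      rw [show ((n:ℤ))-2-5*(-1-j) = (n:ℤ)+3+5*j by ring,
          show 10*(-1-j)^2+8*(-1-j)+(n:ℤ)+2 = 10*j^2+12*j+(n:ℤ)+4 by ring]
      linear_combination hk
    rw [Finset.sum_congr rfl (fun j _ => key j)]
    rw [Finset.sum_add_distrib, Finset.sum_add_distrib, Finset.sum_sub_distrib]
    rw [sum_Phe (n:ℤ) M (by simp [hMdef]; push_cast; omega), sub_self, add_zero, ← Finset.mul_sum]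
  · -- odd, L = 2n+1
    subst hn
    have key : ∀ j : ℤ, T (2*n + 1 + 2) j =
        T (2*n + 1 + 1) j + q ^ (2*n + 1 + 1) * T (2*n + 1) j + (Pho n j - Pho n (-j)) := by
      intro j
      unfold T Pho
      rw [fd, fd, fd, fd, fd, fd]
      push_cast
      rw [show (2*(n:ℤ) + 1 + 2 - 1)/2 = n + 1 by omega,
          show (2*(n:ℤ) + 1 + 2 - 3)/2 = n by omega,
          show (2*(n:ℤ) + 1 + 1 - 1)/2 = n by omega,
          show (2*(n:ℤ) + 1 + 1 - 3)/2 = n - 1 by omega,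
          show (2*(n:ℤ) + 1 - 1)/2 = n by omega,
          show (2*(n:ℤ) + 1 - 3)/2 = n - 1 by omega]
      rw [show 2*(n:ℤ) + 1 + 2 = 2*n+3 by ring, show 2*(n:ℤ) + 1 + 1 = 2*n+2 by ring]
      rw [show q ^ (2*n + 1 + 1) = q ^ (2*(n:ℤ)+2) by
        rw [← zpow_natCast]; congr 1 <;> omega]
      have hk := keyOdd (n:ℤ) j (by positivity)
      rw [show ((n:ℤ))+1-5*(-j) = (n:ℤ)+1+5*j by ring,
          show 10*(-j)^2-2*(-j)+(n:ℤ)+1 = 10*j^2+2*j+(n:ℤ)+1 by ring]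
      linear_combination hk
    rw [Finset.sum_congr rfl (fun j _ => key j)]
    rw [Finset.sum_add_distrib, Finset.sum_add_distrib, Finset.sum_sub_distrib]
    rw [sum_Pho (n:ℤ) M (by simp [hMdef]; push_cast; omega), sub_self, add_zero, ← Finset.mul_sum]

lemma base0 : Dl 0 = ∑ᶠ j : ℤ, T 0 j := by
  have h1 : Dl 0 = 0 := by
    unfold Dl
    rw [Finset.sum_range_one]
    norm_num
    rw [qbin_zero (by omega)]
  have h2 : ∑ᶠ j : ℤ, T 0 j = 0 := by
    apply finsum_eq_zero_of_forall_eq_zero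
    intro j
    unfold T
    rw [fd, fd]
    norm_num
    rw [qbin_zero (by omega), qbin_zero (by omega)]
    ring
  rw [h1, h2]

lemma base1 : Dl 1 = ∑ᶠ j : ℤ, T 1 j := by
  have h1 : Dl 1 = 1 := by
    unfold Dl
    rw [Finset.sum_range_succ, Finset.sum_range_one]
    norm_num
    rw [qbin_zero (show ¬((0:ℤ) ≤ 1 ∧ 1 ≤ (-1:ℤ)) by omega),
        qbin_diag (le_refl (0:ℤ))]
    ring
  have h2 : ∑ᶠ j : ℤ, T 1 j = 1 := by
    rw [finsum_eq_single _ (0 : ℤ)]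
    · unfold T
      rw [fd, fd]
      norm_num
      rw [qbin_zero (show ¬((0:ℤ) ≤ -1 ∧ -1 ≤ 1) by omega),
          qbin_zero_right (by omega)]
      ring
    · intro j hj
      unfold T
      rw [fd, fd]
      norm_num
      rw [qbin_zero (by omega), qbin_zero (by omega)]
      ring
  rw [h1, h2]

/-- For `L ≥ 0`, `d_L(q) = Σ_{t≥0} q^{t²+t} qbinom(L-t-1,t)` equals the alternating sum over
all integers `j` of `q^{j(10j+3)} qbinom(L, ⌊(L-1)/2⌋-5j) - q^{(2j+1)(5j+1)} qbinom(L, ⌊(L-3)/2⌋-5j)`. -/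
theorem stmt4 (L : ℕ) :
    ∑ t ∈ Finset.range (L + 1), q ^ (t ^ 2 + t) * qbin q ((L : ℤ) - t - 1) t =
    ∑ᶠ j : ℤ,
      (q ^ (j * (10 * j + 3)) * qbin q L (((L : ℤ) - 1).fdiv 2 - 5 * j)
       - q ^ ((2 * j + 1) * (5 * j + 1)) * qbin q L (((L : ℤ) - 3).fdiv 2 - 5 * j)) := by
  have main : ∀ L : ℕ, Dl L = ∑ᶠ j : ℤ, T L j := by
    intro L
    induction L using Nat.strong_induction_on with
    | _ L ih =>
      match L with
      | 0 => exact base0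
      | 1 => exact base1
      | (L+2) => rw [Dl_rec, S_rec, ih (L+1) (by omega), ih L (by omega)]
  exact main L
end
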